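/- arXiv:1608.06109 — 7 statements merged into one kernel-verified Lean document; each statement's English description precedes it below -/
import Mathlib

section
/- Let ρ : ℤ → ℝ be a bounded function with ρ_k ≥ 0 for all k ∈ ℤ. Define the bounded linear operator M on the Hilbert space ℓ²(ℤ, ℂ) by (Mω)_k = ρ_{k+1} ω_{k+1} − ρ_{k−1} ω_{k−1}. Then every element λ of the spectrum of M is purely imaginary, i.e., Re λ = 0. -/
/-!
Let `S` be the unitary shift `(Sω)_k = ω_{k+1}` and `Y` the multiplication by `√ρ`, a bounded
self-adjoint operator. Then `M = (S - S⁻¹) Y Y*`, where `A = S - S⁻¹ = S - S*` is skew-adjoint. Away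
from `0`, the spectrum of `(A Y) Y*` coincides with that of `Y* (A Y) = Y* A Y`, which is again
skew-adjoint and hence has purely imaginary spectrum (`i • Y* A Y` is self-adjoint).
-/

open scoped ENNReal

theorem re_eq_zero_of_mem_spectrum_of_mem_skewAdjoint {A : Type*} [CStarAlgebra A] {a : A}
    (ha : a ∈ skewAdjoint A) {z : ℂ} (hz : z ∈ spectrum ℂ a) : z.re = 0 := by
  have hIz : Complex.I * z ∈ spectrum ℂ (Complex.I • a) := by
    rw [← Units.val_mk0 Complex.I_ne_zero, ← Units.smul_def, spectrum.unit_smul_eq_smul]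
    exact Set.smul_mem_smul_set hz
  have hIa : IsSelfAdjoint (Complex.I • a) :=
    isSelfAdjoint_smul_of_mem_skewAdjoint Complex.I_mem_skewAdjoint ha
  simpa using hIa.im_eq_zero_of_mem_spectrum hIz

theorem re_eq_zero_of_mem_spectrum_mul_mul_star {A : Type*} [CStarAlgebra A] {a : A}
    (ha : a ∈ skewAdjoint A) (b : A) {z : ℂ} (hz : z ∈ spectrum ℂ (a * b * star b)) :
    z.re = 0 := by
  rcases eq_or_ne z 0 with rfl | hz0
  · rfl
  have hz' : z ∈ spectrum ℂ (star b * (a * b)) \ {0} := by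
    rw [← spectrum.nonzero_mul_comm]
    exact ⟨hz, hz0⟩
  rw [← mul_assoc] at hz'
  exact re_eq_zero_of_mem_spectrum_of_mem_skewAdjoint (skewAdjoint.conjugate' ha b) hz'.1

theorem Memℓp.comp_equiv {α β E : Type*} [NormedAddCommGroup E] {p : ℝ≥0∞} {f : α → E}
    (hf : Memℓp f p) (e : β ≃ α) : Memℓp (f ∘ e) p := by
  rcases p.trichotomy with rfl | rfl | hp
  · rw [memℓp_zero_iff] at hf ⊢
    exact hf.preimage e.injective.injOn
  · rw [memℓp_infty_iff] at hf ⊢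
    exact hf.mono (Set.range_comp_subset_range e (fun a => ‖f a‖))
  · rw [memℓp_gen_iff hp] at hf ⊢
    exact e.summable_iff.mpr hf

namespace lp

variable {α β 𝕜 E : Type*} [NormedField 𝕜] [NormedAddCommGroup E] [NormedSpace 𝕜 E]
  {p : ℝ≥0∞} [Fact (1 ≤ p)]

theorem norm_comp_equiv (f : lp (fun _ : α => E) p) (e : β ≃ α) :
    ‖(⟨f ∘ e, (lp.memℓp f).comp_equiv e⟩ : lp (fun _ : β => E) p)‖ = ‖f‖ := by
  rcases p.dichotomy with rfl | hp
  · simp only [lp.norm_eq_ciSup]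
    exact e.iSup_comp (g := fun a => ‖f a‖)
  · have hp : 0 < p.toReal := zero_lt_one.trans_le hp
    simp only [lp.norm_eq_tsum_rpow hp]
    rw [← e.tsum_eq]
    rfl

variable (𝕜 E p) in
noncomputable def compEquiv (e : β ≃ α) : lp (fun _ : α => E) p ≃ₗᵢ[𝕜] lp (fun _ : β => E) p where
  toFun f := ⟨f ∘ e, (lp.memℓp f).comp_equiv e⟩
  invFun g := ⟨g ∘ e.symm, (lp.memℓp g).comp_equiv e.symm⟩
  map_add' _ _ := rfl
  map_smul' _ _ := rfl
  left_inv f := by ext; simp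
  right_inv g := by ext; simp
  norm_map' f := norm_comp_equiv f e

@[simp] theorem compEquiv_apply (e : β ≃ α) (f : lp (fun _ : α => E) p) (b : β) :
    compEquiv 𝕜 E p e f b = f (e b) := rfl

@[simp] theorem compEquiv_symm_apply (e : β ≃ α) (g : lp (fun _ : β => E) p) (a : α) :
    (compEquiv 𝕜 E p e).symm g a = g (e.symm a) := rfl

end lp

theorem LinearIsometryEquiv.coe_sub_symm_mem_skewAdjoint {𝕜 H : Type*} [RCLike 𝕜]
    [NormedAddCommGroup H] [InnerProductSpace 𝕜 H] [CompleteSpace H] (e : H ≃ₗᵢ[𝕜] H) :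
    (e : H →L[𝕜] H) - e.symm ∈ skewAdjoint (H →L[𝕜] H) := by
  rw [skewAdjoint.mem_iff, star_sub, ContinuousLinearMap.star_eq_adjoint,
    ContinuousLinearMap.star_eq_adjoint, e.adjoint_eq_symm, e.symm.adjoint_eq_symm,
    e.symm_symm, neg_sub]

theorem lp.isSelfAdjoint_mapCLM {α 𝕜 : Type*} [RCLike 𝕜] {E : α → Type*}
    [∀ i, NormedAddCommGroup (E i)] [∀ i, InnerProductSpace 𝕜 (E i)] [∀ i, CompleteSpace (E i)]
    (T : ∀ i, E i →L[𝕜] E i) (hT : ∀ i, IsSelfAdjoint (T i)) {K : ℝ} (hK : 0 ≤ K)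
    (hTK : ∀ i, ‖T i‖ ≤ K) : IsSelfAdjoint (lp.mapCLM 2 T hK hTK) := by
  rw [ContinuousLinearMap.isSelfAdjoint_iff', eq_comm, ContinuousLinearMap.eq_adjoint_iff]
  intro f g
  simp only [lp.inner_eq_tsum, lp.mapCLM_apply_coe]
  exact tsum_congr fun i => (hT i).isSymmetric _ _

theorem lp.exists_isSelfAdjoint_mul_self_eq_diag {α : Type*} (ρ : α → ℝ)
    (hbd : ∃ C : ℝ, ∀ k, |ρ k| ≤ C) (hpos : ∀ k, 0 ≤ ρ k) :
    ∃ Y : lp (fun _ : α => ℂ) 2 →L[ℂ] lp (fun _ : α => ℂ) 2,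
      IsSelfAdjoint Y ∧ ∀ ω k, Y (Y ω) k = ρ k * ω k := by
  obtain ⟨C, hC⟩ := hbd
  have hnorm (k : α) : ‖(√(ρ k) : ℂ) • (1 : ℂ →L[ℂ] ℂ)‖ ≤ √C := by
    rw [norm_smul, norm_one, mul_one, Complex.norm_real, Real.norm_of_nonneg (Real.sqrt_nonneg _)]
    exact Real.sqrt_le_sqrt ((le_abs_self _).trans (hC k))
  refine ⟨lp.mapCLM 2 _ (Real.sqrt_nonneg C) hnorm, lp.isSelfAdjoint_mapCLM _
    (fun k => ?_) _ _, fun ω k => ?_⟩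
  · exact IsSelfAdjoint.smul (Complex.conj_ofReal _) (IsSelfAdjoint.one _)
  · simp only [lp.mapCLM_apply_coe, smul_apply, one_apply_eq_self, smul_eq_mul,
      ← mul_assoc, ← Complex.ofReal_mul, Real.mul_self_sqrt (hpos k)]

/-- If `ρ : ℤ → ℝ` is bounded and nonnegative, then the bounded operator `M`
on `ℓ²(ℤ, ℂ)` given by `(Mω)_k = ρ_{k+1} ω_{k+1} - ρ_{k-1} ω_{k-1}` has purely
imaginary spectrum. -/
theorem spectrum_purely_imaginary_of_nonneg_coeffs
    (ρ : ℤ → ℝ) (hbd : ∃ C : ℝ, ∀ k : ℤ, |ρ k| ≤ C) (hpos : ∀ k : ℤ, 0 ≤ ρ k)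
    (M : lp (fun _ : ℤ => ℂ) 2 →L[ℂ] lp (fun _ : ℤ => ℂ) 2)
    (hM : ∀ (ω : lp (fun _ : ℤ => ℂ) 2) (k : ℤ),
      (M ω) k = (ρ (k + 1) : ℂ) * ω (k + 1) - (ρ (k - 1) : ℂ) * ω (k - 1)) :
    ∀ z ∈ spectrum ℂ M, z.re = 0 := by
  obtain ⟨Y, hY, hYY⟩ := lp.exists_isSelfAdjoint_mul_self_eq_diag ρ hbd hpos
  set S := lp.compEquiv ℂ ℂ 2 (Equiv.addRight (1 : ℤ))
  have hM_eq : M = (↑S - ↑S.symm) * Y * star Y := by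
    ext ω k
    rw [hY.star_eq, hM]
    simp [S, hYY, sub_eq_add_neg]
  intro z hz
  exact re_eq_zero_of_mem_spectrum_mul_mul_star S.coe_sub_symm_mem_skewAdjoint Y (hM_eq ▸ hz)
end

section
/- Let κ > 0 and p, a ∈ ℤ² with p ≠ 0. Suppose a belongs to the representative set A, i.e., −|p|_κ² < 2(a₁p₁ + κ²a₂p₂) ≤ |p|_κ², and suppose |a|_κ ≥ |p|_κ. Then |a + kp|_κ ≥ |p|_κ for every k ∈ ℤ; i.e., if the class representative a lies outside the unstable ellipse, then all coefficients ρ_k = 1/|p|_κ² − 1/|a+kp|_κ² are nonnegative. -/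
/-- If the class representative `a` lies in the representative set
`A = {a : -|p|_κ² < 2(a₁p₁ + κ²a₂p₂) ≤ |p|_κ²}` and outside the unstable
ellipse (`|a|_κ ≥ |p|_κ`), then the whole class lies outside the unstable
ellipse: `|a + kp|_κ ≥ |p|_κ` for all `k ∈ ℤ`. -/
theorem class_outside_unstable_ellipse
    (κ : ℝ) (hκ : 0 < κ) (p₁ p₂ a₁ a₂ : ℤ) (hp : ¬(p₁ = 0 ∧ p₂ = 0))
    (hA₁ : -((p₁ : ℝ) ^ 2 + κ ^ 2 * (p₂ : ℝ) ^ 2)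
        < 2 * ((a₁ : ℝ) * (p₁ : ℝ) + κ ^ 2 * (a₂ : ℝ) * (p₂ : ℝ)))
    (hA₂ : 2 * ((a₁ : ℝ) * (p₁ : ℝ) + κ ^ 2 * (a₂ : ℝ) * (p₂ : ℝ))
        ≤ (p₁ : ℝ) ^ 2 + κ ^ 2 * (p₂ : ℝ) ^ 2)
    (ha : Real.sqrt ((a₁ : ℝ) ^ 2 + κ ^ 2 * (a₂ : ℝ) ^ 2)
        ≥ Real.sqrt ((p₁ : ℝ) ^ 2 + κ ^ 2 * (p₂ : ℝ) ^ 2)) :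
    ∀ k : ℤ,
      Real.sqrt (((a₁ + k * p₁ : ℤ) : ℝ) ^ 2 + κ ^ 2 * ((a₂ + k * p₂ : ℤ) : ℝ) ^ 2)
        ≥ Real.sqrt ((p₁ : ℝ) ^ 2 + κ ^ 2 * (p₂ : ℝ) ^ 2) := by
  intro k
  have hA0 : (0:ℝ) ≤ (a₁ : ℝ) ^ 2 + κ ^ 2 * (a₂ : ℝ) ^ 2 := by positivity
  have hsq : (p₁ : ℝ) ^ 2 + κ ^ 2 * (p₂ : ℝ) ^ 2
      ≤ (a₁ : ℝ) ^ 2 + κ ^ 2 * (a₂ : ℝ) ^ 2 := by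
    have := Real.sqrt_le_sqrt_iff (x := (p₁ : ℝ) ^ 2 + κ ^ 2 * (p₂ : ℝ) ^ 2) hA0
    -- fallback: use monotone square
    nlinarith [Real.sq_sqrt hA0,
      Real.sq_sqrt (show (0:ℝ) ≤ (p₁ : ℝ) ^ 2 + κ ^ 2 * (p₂ : ℝ) ^ 2 by positivity),
      Real.sqrt_nonneg ((p₁ : ℝ) ^ 2 + κ ^ 2 * (p₂ : ℝ) ^ 2), ha]
  apply Real.sqrt_le_sqrt
  push_cast
  rcases le_or_gt 0 k with hk | hk
  · have hk' : (0:ℝ) ≤ (k:ℝ) := by exact_mod_cast hk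
    rcases eq_or_lt_of_le hk' with h0 | h1
    · rw [← h0]; nlinarith
    · have h1' : (1:ℝ) ≤ (k:ℝ) := by
        have : (1:ℤ) ≤ k := by exact_mod_cast (by exact_mod_cast h1 : (0:ℤ) < k)
        exact_mod_cast this
      nlinarith [mul_nonneg (sub_nonneg.mpr h1') hk']
  · have h1' : (k:ℝ) ≤ -1 := by
      have : k ≤ -1 := by omega
      exact_mod_cast this
    nlinarith [mul_nonneg (neg_nonneg.mpr (by linarith : (k:ℝ) ≤ 0))
      (by linarith : (0:ℝ) ≤ -(k:ℝ) - 1)]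
end

section
/- Let ρ : ℤ → ℝ satisfy ρ₀ < 0, ρ_k > 0 for all k ≠ 0, and ρ₀ + ρ₂ < 0, and set λ* = √(−ρ₁(ρ₀ + ρ₂)) > 0. Then for all integers m ≤ 0 and n ≥ 2, the characteristic polynomial P_m^n(x) = det(xI − A_m^n) satisfies P_m^n(λ*) ≤ 0. -/
/-- The tridiagonal matrix `A_m^n` indexed by `{m, …, n} ⊆ ℤ`, with
superdiagonal entries `(A)_{k,k+1} = ρ_{k+1}`, subdiagonal entries
`(A)_{k,k-1} = -ρ_{k-1}`, and zero diagonal. -/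
def triA (ρ : ℤ → ℝ) (m n : ℤ) :
    Matrix ↥(Finset.Icc m n) ↥(Finset.Icc m n) ℝ :=
  fun i j =>
    if (j : ℤ) = (i : ℤ) + 1 then ρ ((i : ℤ) + 1)
    else if (j : ℤ) = (i : ℤ) - 1 then -ρ ((i : ℤ) - 1)
    else 0

/-- The characteristic polynomial `P_m^n(x) = det(xI - A_m^n)`. -/
noncomputable def triP (ρ : ℤ → ℝ) (m n : ℤ) (x : ℝ) : ℝ :=
  (x • (1 : Matrix ↥(Finset.Icc m n) ↥(Finset.Icc m n) ℝ) - triA ρ m n).det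

/-!
Expanding `det (x • 1 - A_m^n)` along its first row gives the three-term recurrence
`P_m^n = x P_{m+1}^n + ρ_m ρ_{m+1} P_{m+2}^n` (for `m < n`), whose coefficient `ρ_m ρ_{m+1}` is
positive unless `m ∈ {-1, 0}`. So for `x ≥ 0` a sign shared by two consecutive values of `m`
propagates to all smaller `m`: from `P_{n+1}^n = 1`, `P_n^n = x` one gets `P_m^n(x) ≥ 0` for
`m ≥ 1`, and it remains to show `P_0^n(λ*) ≤ 0` and `P_{-1}^n(λ*) ≤ 0`. As
`λ*² + ρ₀ρ₁ = -ρ₁ρ₂`, unrolling the recurrence three times gives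
`P_0^n(λ*) = -ρ₁ρ₂²ρ₃ P_4^n(λ*) ≤ 0` for `n ≥ 3` (and `P_0^2(λ*) = 0`); finally
`P_{-1}^n = λ* P_0^n + ρ₋₁ρ₀ P_1^n ≤ 0` because `ρ₋₁ρ₀ < 0`.
-/

open Matrix

theorem nonneg_of_two_step_recurrence {R : Type*} [Semiring R] [PartialOrder R] [IsOrderedRing R]
    {u c : ℤ → R} {x : R} {a b : ℤ} (hx : 0 ≤ x)
    (hc : ∀ k, a ≤ k → k < b → 0 ≤ c k)
    (hu : ∀ k, a ≤ k → k < b → u k = x * u (k + 1) + c k * u (k + 2))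
    (hb : 0 ≤ u b) (hb₁ : 0 ≤ u (b + 1)) {k : ℤ} (hak : a ≤ k) (hkb : k ≤ b + 1) :
    0 ≤ u k := by
  suffices h : ∀ j : ℕ, a ≤ b + 1 - j → 0 ≤ u (b + 1 - j) by
    have := h (b + 1 - k).toNat (by omega)
    rwa [show b + 1 - ((b + 1 - k).toNat : ℤ) = k by omega] at this
  intro j
  induction j using Nat.twoStepInduction with
  | zero => intro _; simpa using hb₁
  | one => intro _; simpa using hb
  | more j ih ih₁ =>
    intro hj
    push_cast at hj ⊢
    rw [hu _ hj (by omega)]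
    have h₁ := ih₁ (by push_cast; omega)
    have h₀ := ih (by omega)
    rw [show b + 1 - (j + 2) + 1 = b + 1 - ((j + 1 : ℕ) : ℤ) by push_cast; ring,
      show b + 1 - (j + 2) + 2 = b + 1 - j by ring]
    exact add_nonneg (mul_nonneg hx h₁) (mul_nonneg (hc _ hj (by omega)) h₀)

/-- `x • 1 - triA ρ m (m + N - 1)`, transported to the index type `Fin N` by `i ↦ m + i`. -/
def shiftedCharMatrix (ρ : ℤ → ℝ) (m : ℤ) (x : ℝ) (N : ℕ) : Matrix (Fin N) (Fin N) ℝ :=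
  fun i j =>
    if (i : ℕ) = j then x
    else if (j : ℕ) = i + 1 then -ρ (m + j)
    else if (i : ℕ) = j + 1 then ρ (m + j)
    else 0

theorem shiftedCharMatrix_submatrix_succ (ρ : ℤ → ℝ) (m : ℤ) (x : ℝ) (N : ℕ) :
    (shiftedCharMatrix ρ m x (N + 1)).submatrix Fin.succ Fin.succ =
      shiftedCharMatrix ρ (m + 1) x N := by
  ext i j
  simp only [submatrix_apply, shiftedCharMatrix, Fin.val_succ, Nat.cast_add, Nat.cast_one,
    add_right_cancel_iff]
  rw [show m + (j + 1 : ℤ) = m + 1 + j by ring]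

theorem det_shiftedCharMatrix_add_two (ρ : ℤ → ℝ) (m : ℤ) (x : ℝ) (N : ℕ) :
    (shiftedCharMatrix ρ m x (N + 2)).det =
      x * (shiftedCharMatrix ρ (m + 1) x (N + 1)).det +
        ρ m * ρ (m + 1) * (shiftedCharMatrix ρ (m + 2) x N).det := by
  set A := shiftedCharMatrix ρ m x (N + 2)
  have hminor : (A.submatrix Fin.succ (Fin.succAbove 1)).det =
      ρ m * (shiftedCharMatrix ρ (m + 2) x N).det := by
    rw [det_succ_column_zero, Fin.sum_univ_succ, Finset.sum_eq_zero, add_zero]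
    · have : (A.submatrix Fin.succ (Fin.succAbove 1)).submatrix (Fin.succAbove 0) Fin.succ =
          (A.submatrix Fin.succ Fin.succ).submatrix Fin.succ Fin.succ := by
        ext i j
        simp [Fin.succAbove_zero, Fin.one_succAbove_succ]
      rw [this, shiftedCharMatrix_submatrix_succ, shiftedCharMatrix_submatrix_succ,
        show m + 1 + 1 = m + 2 by ring]
      simp [A, shiftedCharMatrix]
    · intro i _
      simp [A, shiftedCharMatrix]
  rw [det_succ_row_zero, Fin.sum_univ_succ, Fin.sum_univ_succ, Finset.sum_eq_zero, add_zero]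
  · rw [show (0 : Fin (N + 1)).succ = 1 from rfl, hminor, Fin.succAbove_zero,
      shiftedCharMatrix_submatrix_succ]
    simp only [A, shiftedCharMatrix, Fin.coe_ofNat_eq_mod, Nat.zero_mod, Nat.one_mod, pow_zero,
      pow_one, ↓reduceIte, zero_ne_one, zero_add, Nat.cast_one, one_mul, mul_neg, neg_mul, neg_neg]
    ring
  · intro j _
    simp [A, shiftedCharMatrix]

def finEquivIcc (m n : ℤ) : Fin (n + 1 - m).toNat ≃ Finset.Icc m n where
  toFun i := ⟨m + i, by have := i.isLt; rw [Finset.mem_Icc]; omega⟩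
  invFun k := ⟨(k - m).toNat, by have := Finset.mem_Icc.1 k.2; omega⟩
  left_inv i := by ext; simp
  right_inv k := by ext; have := Finset.mem_Icc.1 k.2; simp; omega

theorem triP_eq_det_shiftedCharMatrix (ρ : ℤ → ℝ) (m n : ℤ) (x : ℝ) :
    triP ρ m n x = (shiftedCharMatrix ρ m x (n + 1 - m).toNat).det := by
  rw [triP, ← det_submatrix_equiv_self (finEquivIcc m n)]
  congr 1
  ext i j
  have hi : (finEquivIcc m n i : ℤ) = m + i := rfl
  have hj : (finEquivIcc m n j : ℤ) = m + j := rfl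
  simp only [submatrix_apply, Matrix.sub_apply, Matrix.smul_apply, one_apply, triA,
    shiftedCharMatrix, smul_eq_mul, Subtype.ext_iff, hi, hj]
  split_ifs <;> first
    | (exfalso; omega)
    | ring1
    | (rw [show m + (j : ℕ) = m + (i : ℕ) + 1 by omega]; ring1)
    | (rw [show m + (j : ℕ) = m + (i : ℕ) - 1 by omega]; ring1)

theorem triP_of_lt (ρ : ℤ → ℝ) (x : ℝ) {m n : ℤ} (h : n < m) : triP ρ m n x = 1 := by
  rw [triP_eq_det_shiftedCharMatrix, show (n + 1 - m).toNat = 0 by omega, det_isEmpty]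

theorem triP_self (ρ : ℤ → ℝ) (x : ℝ) (m : ℤ) : triP ρ m m x = x := by
  rw [triP_eq_det_shiftedCharMatrix, show (m + 1 - m).toNat = 1 by omega, det_unique]
  simp [shiftedCharMatrix]

theorem triP_recurrence (ρ : ℤ → ℝ) (x : ℝ) {m n : ℤ} (h : m < n) :
    triP ρ m n x = x * triP ρ (m + 1) n x + ρ m * ρ (m + 1) * triP ρ (m + 2) n x := by
  obtain ⟨N, hN⟩ : ∃ N : ℕ, (n + 1 - m).toNat = N + 2 := ⟨(n - m - 1).toNat, by omega⟩
  rw [triP_eq_det_shiftedCharMatrix, triP_eq_det_shiftedCharMatrix,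
    triP_eq_det_shiftedCharMatrix, hN, show (n + 1 - (m + 1)).toNat = N + 1 by omega,
    show (n + 1 - (m + 2)).toNat = N by omega, det_shiftedCharMatrix_add_two]

theorem triP_nonneg (ρ : ℤ → ℝ) {x : ℝ} {m : ℤ} (hx : 0 ≤ x) (hρ : ∀ k, m ≤ k → 0 ≤ ρ k)
    (n : ℤ) : 0 ≤ triP ρ m n x := by
  rcases lt_or_ge (n + 1) m with h | h
  · rw [triP_of_lt ρ x (by omega)]
    exact zero_le_one
  · refine nonneg_of_two_step_recurrence (u := fun k => triP ρ k n x)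
      (c := fun k => ρ k * ρ (k + 1)) hx
      (fun k hk _ => mul_nonneg (hρ k hk) (hρ (k + 1) (by omega)))
      (fun k _ hk => triP_recurrence ρ x hk) ?_ ?_ le_rfl h
    · simpa only [triP_self] using hx
    · simp only [triP_of_lt ρ x (lt_add_one n), zero_le_one]

theorem triP_nonpos_of_le (ρ : ℤ → ℝ) {x : ℝ} {m₀ n : ℤ} (hx : 0 ≤ x)
    (hρ : ∀ k ≤ m₀, 0 ≤ ρ k) (hn : m₀ ≤ n) (h₀ : triP ρ m₀ n x ≤ 0)
    (h₁ : triP ρ (m₀ + 1) n x ≤ 0) {m : ℤ} (hm : m ≤ m₀ + 1) : triP ρ m n x ≤ 0 := by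
  have := nonneg_of_two_step_recurrence (u := fun k => -triP ρ k n x)
    (c := fun k => ρ k * ρ (k + 1)) (a := m) (b := m₀) hx
    (fun k _ hk => mul_nonneg (hρ k hk.le) (hρ (k + 1) (by omega)))
    (fun k _ hk => by simp only [triP_recurrence ρ x (hk.trans_le hn)]; ring)
    (neg_nonneg.2 h₀) (neg_nonneg.2 h₁) le_rfl hm
  exact neg_nonneg.1 this

theorem triP_zero_eq_of_sq_eq (ρ : ℤ → ℝ) {x : ℝ} (hx : x ^ 2 = -ρ 1 * (ρ 0 + ρ 2)) {n : ℤ}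
    (hn : 3 ≤ n) : triP ρ 0 n x = -(ρ 1 * ρ 2 ^ 2 * ρ 3) * triP ρ 4 n x := by
  have e₀ : triP ρ 0 n x = x * triP ρ 1 n x + ρ 0 * ρ 1 * triP ρ 2 n x :=
    triP_recurrence ρ x (by omega)
  have e₁ : triP ρ 1 n x = x * triP ρ 2 n x + ρ 1 * ρ 2 * triP ρ 3 n x :=
    triP_recurrence ρ x (by omega)
  have e₂ : triP ρ 2 n x = x * triP ρ 3 n x + ρ 2 * ρ 3 * triP ρ 4 n x :=
    triP_recurrence ρ x (by omega)
  linear_combination e₀ + x * e₁ + triP ρ 2 n x * hx - ρ 1 * ρ 2 * e₂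

theorem triP_zero_nonpos_of_sq_eq (ρ : ℤ → ℝ) {x : ℝ} (hx₀ : 0 ≤ x)
    (hx : x ^ 2 = -ρ 1 * (ρ 0 + ρ 2)) (hρ : ∀ k, 1 ≤ k → 0 ≤ ρ k) {n : ℤ} (hn : 2 ≤ n) :
    triP ρ 0 n x ≤ 0 := by
  rcases hn.eq_or_lt with rfl | hn
  · have e₀ : triP ρ 0 2 x = x * triP ρ 1 2 x + ρ 0 * ρ 1 * x := by
      rw [triP_recurrence ρ x (by norm_num), zero_add, zero_add, triP_self]
    have e₁ : triP ρ 1 2 x = x * x + ρ 1 * ρ 2 := by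
      rw [triP_recurrence ρ x (by norm_num), one_add_one_eq_two, triP_self,
        triP_of_lt ρ x (by norm_num), mul_one]
    exact (show triP ρ 0 2 x = 0 by linear_combination e₀ + x * e₁ + x * hx).le
  · rw [triP_zero_eq_of_sq_eq ρ hx hn]
    refine mul_nonpos_of_nonpos_of_nonneg (neg_nonpos.2 ?_)
      (triP_nonneg ρ hx₀ (fun k hk => hρ k (by omega)) n)
    exact mul_nonneg (mul_nonneg (hρ 1 le_rfl) (sq_nonneg _)) (hρ 3 (by norm_num))

/-- If `ρ₀ < 0`, `ρ_k > 0` for `k ≠ 0`, and `ρ₀ + ρ₂ < 0`, then with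
`λ* = √(-ρ₁(ρ₀ + ρ₂)) > 0` one has `P_m^n(λ*) ≤ 0` for all `m ≤ 0`, `n ≥ 2`. -/
theorem charpoly_nonpos_at_lambda_star
    (ρ : ℤ → ℝ) (h0 : ρ 0 < 0) (hk : ∀ k : ℤ, k ≠ 0 → 0 < ρ k)
    (h02 : ρ 0 + ρ 2 < 0) :
    0 < Real.sqrt (-(ρ 1) * (ρ 0 + ρ 2))
    ∧ ∀ m n : ℤ, m ≤ 0 → 2 ≤ n →
        triP ρ m n (Real.sqrt (-(ρ 1) * (ρ 0 + ρ 2))) ≤ 0 := by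
  set L := Real.sqrt (-(ρ 1) * (ρ 0 + ρ 2))
  have hrad : 0 < -(ρ 1) * (ρ 0 + ρ 2) :=
    mul_pos_of_neg_of_neg (neg_neg_of_pos (hk 1 one_ne_zero)) h02
  have hL : 0 < L := Real.sqrt_pos.2 hrad
  have hL2 : L ^ 2 = -(ρ 1) * (ρ 0 + ρ 2) := Real.sq_sqrt hrad.le
  refine ⟨hL, fun m n hm hn => ?_⟩
  have hρ : ∀ k, 1 ≤ k → 0 ≤ ρ k := fun k hk' => (hk k (by omega)).le
  have hP : triP ρ 0 n L ≤ 0 := triP_zero_nonpos_of_sq_eq ρ hL.le hL2 hρ hn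
  have hPneg : triP ρ (-1) n L ≤ 0 := by
    have e : triP ρ (-1) n L = L * triP ρ 0 n L + ρ (-1) * ρ 0 * triP ρ 1 n L :=
      triP_recurrence ρ L (by omega)
    rw [e]
    exact add_nonpos (mul_nonpos_of_nonneg_of_nonpos hL.le hP)
      (mul_nonpos_of_nonpos_of_nonneg (mul_neg_of_pos_of_neg (hk (-1) (by norm_num)) h0).le
        (triP_nonneg ρ hL.le hρ n))
  exact triP_nonpos_of_le ρ hL.le (fun k hk' => (hk k (by omega)).le) (by omega) hPneg
    (by simpa using hP) (by omega)
end

section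
/- Let ρ : ℤ → ℝ satisfy ρ₀ < 0, ρ_k > 0 for all k ≠ 0, and ρ₀ + ρ₂ < 0, and set λ* = √(−ρ₁(ρ₀ + ρ₂)) > 0. Then for all integers m ≤ 0 and n ≥ 2, the matrix A_m^n has a real eigenvalue λ with λ ≥ λ*. In particular A_m^n has an eigenvalue with positive real part bounded below by λ*, uniformly in the truncation parameters m and n. -/
section Tridiagonal

variable {R : Type*}

def tridiagonal [Zero R] (d a b : ℕ → R) (N : ℕ) : Matrix (Fin N) (Fin N) R :=
  Matrix.of fun i j =>
    if (j : ℕ) = i + 1 then a i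
    else if (i : ℕ) = j + 1 then b j
    else if i = j then d i else 0

theorem tridiagonal_apply_eq_zero [Zero R] (d a b : ℕ → R) {N : ℕ} {i j : Fin N}
    (h : (i : ℕ) + 1 < j ∨ (j : ℕ) + 1 < i) : tridiagonal d a b N i j = 0 := by
  simp only [tridiagonal, Matrix.of_apply, Fin.ext_iff]
  split_ifs <;> first | rfl | omega

@[simp]
theorem tridiagonal_submatrix_castSucc [Zero R] (d a b : ℕ → R) (N : ℕ) :
    (tridiagonal d a b (N + 1)).submatrix Fin.castSucc Fin.castSucc = tridiagonal d a b N := by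
  ext i j
  simp [tridiagonal]

theorem det_tridiagonal_add_two [CommRing R] (d a b : ℕ → R) (N : ℕ) :
    (tridiagonal d a b (N + 2)).det =
      d (N + 1) * (tridiagonal d a b (N + 1)).det - a N * b N * (tridiagonal d a b N).det := by
  set T := tridiagonal d a b (N + 2)
  have minor : (T.submatrix Fin.castSucc (Fin.last N).castSucc.succAbove).det =
      a N * (tridiagonal d a b N).det := by
    rw [Matrix.det_succ_column _ (Fin.last N), Fin.sum_univ_castSucc,
      Finset.sum_eq_zero fun i _ => ?_]
    · have h1 : T (Fin.last N).castSucc (Fin.last (N + 1)) = a N := by simp [T, tridiagonal]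
      have h2 : T.submatrix (Fin.castSucc ∘ Fin.castSucc)
          ((Fin.last N).castSucc.succAbove ∘ Fin.castSucc) = tridiagonal d a b N := by
        ext i j
        simp [T, tridiagonal, Fin.succAbove]
      simp [Fin.succAbove_last, h1, h2]
    · simp [T, tridiagonal_apply_eq_zero, Fin.succAbove]
  rw [Matrix.det_succ_row _ (Fin.last (N + 1)), Fin.sum_univ_castSucc, Fin.sum_univ_castSucc,
    Finset.sum_eq_zero fun i _ => ?_]
  · have h1 : T (Fin.last (N + 1)) (Fin.last N).castSucc = b N := by
      simp [T, tridiagonal, show N ≠ N + 1 + 1 by omega]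
    have h2 : T (Fin.last (N + 1)) (Fin.last (N + 1)) = d (N + 1) := by simp [T, tridiagonal]
    simp [Fin.succAbove_last, minor, h1, h2, T]
    ring
  · simp [T, tridiagonal_apply_eq_zero]
end Tridiagonal

section ThreeTermRecurrence

variable {x : ℝ} {w D : ℕ → ℝ}

theorem nonneg_of_recurrence (hD : ∀ k, D (k + 2) = x * D (k + 1) + w k * D k) (hx : 0 ≤ x)
    (h0 : 0 ≤ D 0) (h1 : 0 ≤ D 1) : ∀ N, (∀ k, k + 2 ≤ N → 0 ≤ w k) → 0 ≤ D N
  | 0, _ => h0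
  | 1, _ => h1
  | N + 2, hw => by
    rw [hD]
    have hN := nonneg_of_recurrence hD hx h0 h1 N fun k hk => hw k (by omega)
    have hN1 := nonneg_of_recurrence hD hx h0 h1 (N + 1) fun k hk => hw k (by omega)
    exact add_nonneg (mul_nonneg hx hN1) (mul_nonneg (hw N le_rfl) hN)

theorem nonpos_of_recurrence (hD : ∀ k, D (k + 2) = x * D (k + 1) + w k * D k) (hx : 0 ≤ x)
    {j N : ℕ} (hj : D j ≤ 0) (hj1 : D (j + 1) ≤ 0) (hw : ∀ k, j ≤ k → 0 ≤ w k) (hN : j ≤ N) :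
    D N ≤ 0 := by
  obtain ⟨i, rfl⟩ := Nat.exists_eq_add_of_le hN
  have hD' : ∀ k, -D (j + k + 2) = x * -D (j + k + 1) + w (j + k) * -D (j + k) := fun k => by
    rw [hD]
    ring
  have := nonneg_of_recurrence (D := fun k => -D (j + k)) (w := fun k => w (j + k)) hD' hx
    (by simpa using hj) (by simpa using hj1) i fun k _ => hw _ (by omega)
  linarith

theorem nonpos_add_two_and_add_three (hD : ∀ k, D (k + 2) = x * D (k + 1) + w k * D k)
    (hx : 0 ≤ x) {q : ℕ} (hq : 0 ≤ D q) (hq1 : D (q + 1) ≤ x * D q) (hwq : w q ≤ 0)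
    (hwq1 : 0 ≤ w (q + 1)) (hbal : x ^ 2 + w q + w (q + 1) = 0) :
    D (q + 2) ≤ 0 ∧ D (q + 3) ≤ 0 := by
  have h3 : D (q + 3) = w q * (x * D q - D (q + 1)) := by
    rw [hD, hD]
    linear_combination D (q + 1) * hbal
  constructor
  · rw [hD]
    nlinarith [mul_le_mul_of_nonneg_left hq1 hx, mul_nonneg hwq1 hq]
  · rw [h3]
    exact mul_nonpos_of_nonpos_of_nonneg hwq (by linarith)

theorem nonpos_of_recurrence_of_defect (hD : ∀ k, D (k + 2) = x * D (k + 1) + w k * D k)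
    (hD0 : D 0 = 1) (hD1 : D 1 = x) (hx : 0 ≤ x) {q N : ℕ}
    (hw : ∀ k, k + 1 ≠ q → k ≠ q → 0 ≤ w k) (hprev : ∀ k, k + 1 = q → w k ≤ 0)
    (hwq : w q ≤ 0) (hbal : x ^ 2 + w q + w (q + 1) = 0) (hN : q + 2 ≤ N) : D N ≤ 0 := by
  have hbase : 0 ≤ D q ∧ D (q + 1) ≤ x * D q := by
    cases q with
    | zero => simp [hD0, hD1]
    | succ p =>
      have hnonneg : ∀ i ≤ p + 1, 0 ≤ D i := fun i hi =>
        nonneg_of_recurrence hD hx (by simp [hD0]) (by simpa [hD1]) i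
          fun k hk => hw k (by omega) (by omega)
      refine ⟨hnonneg _ le_rfl, ?_⟩
      rw [hD]
      nlinarith [hprev p rfl, hnonneg p (by omega)]
  obtain ⟨h2, h3⟩ := nonpos_add_two_and_add_three hD hx hbase.1 hbase.2 hwq
    (hw _ (by omega) (by omega)) hbal
  exact nonpos_of_recurrence hD hx h2 h3 (fun k hk => hw k (by omega) (by omega)) hN

theorem one_le_of_recurrence (hD : ∀ k, D (k + 2) = x * D (k + 1) + w k * D k)
    (hD0 : D 0 = 1) (hD1 : D 1 = x) {C : ℝ} {N : ℕ} (hC : 0 ≤ C) (hw : ∀ k < N, |w k| ≤ C)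
    (hx : 1 + C ≤ x) : 1 ≤ D N := by
  have key : ∀ k ≤ N, 1 ≤ D k ∧ D k ≤ D (k + 1) := by
    intro k hk
    induction k with
    | zero => simp only [hD0, hD1, zero_add]; constructor <;> linarith
    | succ k ih =>
      obtain ⟨h1, h2⟩ := ih (by omega)
      refine ⟨h1.trans h2, ?_⟩
      rw [hD]
      nlinarith [abs_le.1 (hw k (by omega))]
  exact (key N le_rfl).1

end ThreeTermRecurrence

/-- `triPSeq ρ m x N = triP ρ m (m + N - 1) x`, reindexed by `Fin N`. -/
noncomputable def triPSeq (ρ : ℤ → ℝ) (m : ℤ) (x : ℝ) (N : ℕ) : ℝ :=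
  (tridiagonal (fun _ => x) (fun k => -ρ (m + k + 1)) (fun k => ρ (m + k)) N).det

theorem triPSeq_zero (ρ : ℤ → ℝ) (m : ℤ) (x : ℝ) : triPSeq ρ m x 0 = 1 :=
  Matrix.det_fin_zero

theorem triPSeq_one (ρ : ℤ → ℝ) (m : ℤ) (x : ℝ) : triPSeq ρ m x 1 = x := by
  simp [triPSeq, tridiagonal]

theorem triPSeq_add_two (ρ : ℤ → ℝ) (m : ℤ) (x : ℝ) (N : ℕ) :
    triPSeq ρ m x (N + 2) =
      x * triPSeq ρ m x (N + 1) + ρ (m + N) * ρ (m + N + 1) * triPSeq ρ m x N := by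
  simp only [triPSeq, det_tridiagonal_add_two]
  ring

theorem triP_eq_triPSeq (ρ : ℤ → ℝ) (m n : ℤ) (x : ℝ) :
    triP ρ m n x = triPSeq ρ m x (n + 1 - m).toNat := by
  let e : Fin (n + 1 - m).toNat ≃ Finset.Icc m n :=
    { toFun i := ⟨m + i, Finset.mem_Icc.2 (by omega)⟩
      invFun k := ⟨(k - m).toNat, by have := Finset.mem_Icc.1 k.2; omega⟩
      left_inv i := by ext; simp
      right_inv k := by have := Finset.mem_Icc.1 k.2; ext; simp; omega }
  rw [triP, triPSeq, ← Matrix.det_submatrix_equiv_self e]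
  congr 1
  ext i j
  simp only [Equiv.coe_fn_mk, Matrix.submatrix_apply, Matrix.sub_apply, Matrix.smul_apply,
    Matrix.one_apply, Subtype.mk.injEq, add_right_inj, Nat.cast_inj, smul_eq_mul, mul_ite, mul_one,
    mul_zero, triA, tridiagonal, Fin.ext_iff, Matrix.of_apply, e]
  split_ifs <;> first | (exfalso; omega) | (ring_nf; done) | (ring_nf; congr 1; omega)

theorem continuous_triP (ρ : ℤ → ℝ) (m n : ℤ) : Continuous (triP ρ m n) :=
  ((continuous_id.smul continuous_const).sub continuous_const).matrix_det

theorem exists_one_le_triP (ρ : ℤ → ℝ) (m n : ℤ) (x₀ : ℝ) : ∃ y, x₀ ≤ y ∧ 1 ≤ triP ρ m n y := by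
  set C := ∑ k ∈ Finset.range (n + 1 - m).toNat, |ρ (m + k) * ρ (m + k + 1)|
  refine ⟨max x₀ (1 + C), le_max_left _ _, ?_⟩
  rw [triP_eq_triPSeq]
  exact one_le_of_recurrence (C := C) (triPSeq_add_two ρ m _) (triPSeq_zero ρ m _)
    (triPSeq_one ρ m _) (Finset.sum_nonneg fun _ _ => abs_nonneg _)
    (fun k hk => Finset.single_le_sum (f := fun i : ℕ => |ρ (m + i) * ρ (m + i + 1)|)
      (fun _ _ => abs_nonneg _) (Finset.mem_range.2 hk)) (le_max_right _ _)

theorem triP_sqrt_nonpos (ρ : ℤ → ℝ) (h0 : ρ 0 < 0) (hk : ∀ k : ℤ, k ≠ 0 → 0 < ρ k)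
    (h02 : ρ 0 + ρ 2 < 0) {m n : ℤ} (hm : m ≤ 0) (hn : 2 ≤ n) :
    triP ρ m n (Real.sqrt (-(ρ 1) * (ρ 0 + ρ 2))) ≤ 0 := by
  set x := Real.sqrt (-(ρ 1) * (ρ 0 + ρ 2))
  set q := (-m).toNat
  have hq : m + q = 0 := by omega
  have hρ1 := hk 1 one_ne_zero
  have hx2 : x ^ 2 = -(ρ 1) * (ρ 0 + ρ 2) := Real.sq_sqrt (by nlinarith)
  rw [triP_eq_triPSeq]
  refine nonpos_of_recurrence_of_defect (triPSeq_add_two ρ m x) (triPSeq_zero ρ m x)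
    (triPSeq_one ρ m x) (Real.sqrt_nonneg _) (q := q) (fun k hk1 hk2 => ?_) (fun k hk1 => ?_)
    ?_ ?_ (by omega)
  · exact (mul_pos (hk _ (by omega)) (hk _ (by omega))).le
  · rw [show m + k = -1 by omega, show (-1 : ℤ) + 1 = 0 by norm_num]
    exact (mul_neg_of_pos_of_neg (hk _ (by norm_num)) h0).le
  · rw [hq, zero_add]
    exact (mul_neg_of_neg_of_pos h0 hρ1).le
  · rw [Nat.cast_succ, ← add_assoc, hq, zero_add, show (1 : ℤ) + 1 = 2 by norm_num]
    linear_combination hx2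

/-- If `ρ₀ < 0`, `ρ_k > 0` for `k ≠ 0`, and `ρ₀ + ρ₂ < 0`, then with
`λ* = √(-ρ₁(ρ₀ + ρ₂)) > 0`, every truncation `A_m^n` with `m ≤ 0 ≤ 2 ≤ n` has
a real eigenvalue `λ ≥ λ*`: a uniform positive lower bound on an unstable
eigenvalue, independent of the truncation parameters. -/
theorem truncation_has_real_eigenvalue_ge_lambda_star
    (ρ : ℤ → ℝ) (h0 : ρ 0 < 0) (hk : ∀ k : ℤ, k ≠ 0 → 0 < ρ k)
    (h02 : ρ 0 + ρ 2 < 0) :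
    0 < Real.sqrt (-(ρ 1) * (ρ 0 + ρ 2))
    ∧ ∀ m n : ℤ, m ≤ 0 → 2 ≤ n →
        ∃ lam : ℝ, Real.sqrt (-(ρ 1) * (ρ 0 + ρ 2)) ≤ lam ∧ triP ρ m n lam = 0 := by
  refine ⟨Real.sqrt_pos.2 (mul_pos_of_neg_of_neg (neg_neg_of_pos (hk 1 one_ne_zero)) h02),
    fun m n hm hn => ?_⟩
  obtain ⟨y, hxy, hy⟩ := exists_one_le_triP ρ m n (Real.sqrt (-(ρ 1) * (ρ 0 + ρ 2)))
  obtain ⟨lam, hlam, hroot⟩ := intermediate_value_Icc hxy (continuous_triP ρ m n).continuousOn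
    ⟨triP_sqrt_nonpos ρ h0 hk h02 hm hn, zero_le_one.trans hy⟩
  exact ⟨lam, hlam.1, hroot⟩
end

section
/- Let κ > 0 and let a, p ∈ ℝ² with p ≠ 0, a ≠ 0, a + 2p ≠ 0, and |a|_κ < (√3 − 1)|p|_κ. Then 1/|a|_κ² + 1/|a + 2p|_κ² > 2/|p|_κ², i.e., ρ₀ + ρ₂ < 0 where ρ_k = 1/|p|_κ² − 1/|a + kp|_κ²; and likewise 1/|a|_κ² + 1/|a − 2p|_κ² > 2/|p|_κ² (provided a − 2p ≠ 0). -/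
private lemma key_ineq (t s B : ℝ) (ht : 0 < t) (hs : 0 < s)
    (h : t < (Real.sqrt 3 - 1) * s) (hB : 0 < B) (hBle : B ≤ (t + 2*s)^2) :
    2 / s^2 < 1 / t^2 + 1 / B := by
  have hr : (Real.sqrt 3)^2 = 3 := Real.sq_sqrt (by norm_num)
  have hrn : 0 ≤ Real.sqrt 3 := Real.sqrt_nonneg 3
  have hu : t^2 + 2*t*s < 2*s^2 := by nlinarith
  have hC : 0 < (t + 2*s)^2 := by positivity
  have h1 : 1 / (t + 2*s)^2 ≤ 1 / B := one_div_le_one_div_of_le hB hBle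
  have h2 : 2 / s^2 < 1 / t^2 + 1 / (t + 2*s)^2 := by
    rw [div_add_div _ _ (by positivity) (ne_of_gt hC),
      div_lt_div_iff₀ (by positivity) (by positivity)]
    nlinarith [mul_pos (sub_pos.mpr hu) (show 0 < t^2 + 2*t*s + s^2 by positivity)]
  linarith

/-- If `|a|_κ < (√3 - 1)|p|_κ` then `ρ₀ + ρ₂ < 0` and `ρ₀ + ρ₋₂ < 0`, i.e.
`1/|a|_κ² + 1/|a ± 2p|_κ² > 2/|p|_κ²`, where `|v|_κ² = v₁² + κ²v₂²`. -/
theorem rho_sum_neg_inside_small_ellipse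
    (κ : ℝ) (hκ : 0 < κ) (a p : ℝ × ℝ)
    (hp : p ≠ 0) (ha : a ≠ 0)
    (hap : a + 2 • p ≠ 0) (ham : a - 2 • p ≠ 0)
    (hsmall : Real.sqrt (a.1 ^ 2 + κ ^ 2 * a.2 ^ 2)
        < (Real.sqrt 3 - 1) * Real.sqrt (p.1 ^ 2 + κ ^ 2 * p.2 ^ 2)) :
    1 / (a.1 ^ 2 + κ ^ 2 * a.2 ^ 2)
        + 1 / ((a.1 + 2 * p.1) ^ 2 + κ ^ 2 * (a.2 + 2 * p.2) ^ 2)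
      > 2 / (p.1 ^ 2 + κ ^ 2 * p.2 ^ 2)
    ∧ 1 / (a.1 ^ 2 + κ ^ 2 * a.2 ^ 2)
        + 1 / ((a.1 - 2 * p.1) ^ 2 + κ ^ 2 * (a.2 - 2 * p.2) ^ 2)
      > 2 / (p.1 ^ 2 + κ ^ 2 * p.2 ^ 2) := by
  have hpos : ∀ v : ℝ × ℝ, v ≠ 0 → 0 < v.1 ^ 2 + κ ^ 2 * v.2 ^ 2 := by
    intro v hv
    rcases eq_or_ne v.1 0 with h1 | h1
    · have h2 : v.2 ≠ 0 := by
        intro h2; exact hv (Prod.ext h1 h2)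
      have : 0 < κ ^ 2 * v.2 ^ 2 := by positivity
      nlinarith [sq_nonneg v.1]
    · have : 0 < v.1 ^ 2 := by positivity
      nlinarith [sq_nonneg (κ * v.2)]
  have hA : 0 < a.1 ^ 2 + κ ^ 2 * a.2 ^ 2 := hpos a ha
  have hP : 0 < p.1 ^ 2 + κ ^ 2 * p.2 ^ 2 := hpos p hp
  have hBp : 0 < (a.1 + 2 * p.1) ^ 2 + κ ^ 2 * (a.2 + 2 * p.2) ^ 2 := by
    have := hpos (a + 2 • p) hap
    simpa [Prod.fst_add, Prod.snd_add, two_smul, ← two_mul] using this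
  have hBm : 0 < (a.1 - 2 * p.1) ^ 2 + κ ^ 2 * (a.2 - 2 * p.2) ^ 2 := by
    have := hpos (a - 2 • p) ham
    simpa [Prod.fst_sub, Prod.snd_sub, two_smul, ← two_mul, sub_eq_add_neg] using this
  set t := Real.sqrt (a.1 ^ 2 + κ ^ 2 * a.2 ^ 2) with htdef
  set s := Real.sqrt (p.1 ^ 2 + κ ^ 2 * p.2 ^ 2) with hsdef
  have ht2 : t ^ 2 = a.1 ^ 2 + κ ^ 2 * a.2 ^ 2 := Real.sq_sqrt hA.le
  have hs2 : s ^ 2 = p.1 ^ 2 + κ ^ 2 * p.2 ^ 2 := Real.sq_sqrt hP.le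
  have ht : 0 < t := Real.sqrt_pos.mpr hA
  have hs : 0 < s := Real.sqrt_pos.mpr hP
  -- Cauchy–Schwarz
  have hcs : (a.1 * p.1 + κ ^ 2 * a.2 * p.2) ^ 2 ≤ t ^ 2 * s ^ 2 := by
    rw [ht2, hs2]; nlinarith [sq_nonneg (a.1 * (κ * p.2) - (κ * a.2) * p.1)]
  have habs : |a.1 * p.1 + κ ^ 2 * a.2 * p.2| ≤ t * s := by
    apply abs_le_of_sq_le_sq _ (by positivity)
    calc (a.1 * p.1 + κ ^ 2 * a.2 * p.2) ^ 2 ≤ t ^ 2 * s ^ 2 := hcs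
      _ = (t * s) ^ 2 := by ring
  have hdot := abs_le.mp habs
  have hle_p : (a.1 + 2 * p.1) ^ 2 + κ ^ 2 * (a.2 + 2 * p.2) ^ 2 ≤ (t + 2*s)^2 := by
    nlinarith [hdot.2, ht2, hs2]
  have hle_m : (a.1 - 2 * p.1) ^ 2 + κ ^ 2 * (a.2 - 2 * p.2) ^ 2 ≤ (t + 2*s)^2 := by
    nlinarith [hdot.1, ht2, hs2]
  constructor
  · have := key_ineq t s _ ht hs hsmall hBp hle_p
    rw [ht2, hs2] at this
    exact this
  · have := key_ineq t s _ ht hs hsmall hBm hle_m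
    rw [ht2, hs2] at this
    exact this
end

section
/- Let κ > 0 and p ∈ ℤ² with |p|_κ > √(3(κ² + 1))/(2(2 − √3)), equivalently p₁² + κ²p₂² > 3(κ² + 1)/(4(7 − 4√3)). Then there exists a ∈ ℤ² with a₁p₂ − a₂p₁ ≠ 0 such that the coefficients ρ_k = 1/|p|_κ² − 1/|a + kp|_κ² satisfy ρ₀ < 0, ρ_k > 0 for all k ∈ ℤ with k ≠ 0, and ρ₀ + ρ₂ < 0. -/
/-!
Identify `x ∈ ℤ²` with `x₁ + iκx₂ ∈ ℂ`, so that `|x|_κ = ‖x‖` and `ρ_k = classCoeff p (a + k p)`.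
Dividing by `p`, the sign conditions only involve `β = a / p`, and they all hold on the disc
`D = B(i/√3, 2/√3 - 1)`: it lies in the unit disc and touches the unit discs around `±1` from
outside (`|i/√3 ± 1| = 2/√3`), so `|β| < 1` and `|β + k| > 1` for `k ≠ 0`; moreover
`|β| < √3 - 1`, `|β + 2| < √3 + 1` and `1/(√3 - 1)² + 1/(√3 + 1)² = 2` give `ρ₀ + ρ₂ < 0`,
and `Im β > 0` makes `a` non-parallel to `p`. The hypothesis on `|p|_κ` says exactly that the
covering radius `√(1 + κ²)/2` of the lattice `ℤ + iκℤ` is smaller than the radius of `p D`, so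
rounding the centre `i p/√3` to the lattice gives `a`.
-/

open Complex

theorem one_lt_sqrt_three : 1 < √3 := by
  rw [Real.lt_sqrt zero_le_one]; norm_num

theorem sqrt_three_lt_two : √3 < 2 := by
  rw [Real.sqrt_lt' two_pos]; norm_num

def instabilityDisc : Set ℂ := Metric.ball (I / √3) (2 / √3 - 1)

section InstabilityDisc

variable {β : ℂ}

theorem norm_lt_of_mem_instabilityDisc (hβ : β ∈ instabilityDisc) : ‖β‖ < √3 - 1 := by
  rw [instabilityDisc, mem_ball_iff_norm] at hβ
  have h3 : (0 : ℝ) < √3 := by positivity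
  calc ‖β‖ ≤ ‖I / √3‖ + ‖β - I / √3‖ := norm_le_norm_add_norm_sub' β _
    _ < 1 / √3 + (2 / √3 - 1) := by
      rw [norm_div, norm_I, norm_real, Real.norm_of_nonneg h3.le]; gcongr
    _ = √3 - 1 := by
      field_simp; linear_combination -Real.mul_self_sqrt (show (0 : ℝ) ≤ 3 by norm_num)

theorem im_pos_of_mem_instabilityDisc (hβ : β ∈ instabilityDisc) : 0 < β.im := by
  rw [instabilityDisc, mem_ball_iff_norm] at hβ
  have him : (β - I / √3).im = β.im - 1 / √3 := by
    simp only [sub_im, div_ofReal_im, I_im, one_div]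
  have hdev : -(β - I / √3).im ≤ ‖β - I / √3‖ := (neg_le_abs _).trans (abs_im_le_norm _)
  have hinv : 1 / √3 < 1 := (div_lt_one (by positivity)).mpr one_lt_sqrt_three
  linarith [show 2 / √3 = 2 * (1 / √3) by ring]

theorem add_intCast_ne_zero_of_mem_instabilityDisc (hβ : β ∈ instabilityDisc) (k : ℤ) :
    β + k ≠ 0 := fun h => by
  have him := congrArg im h
  simp only [add_im, intCast_im, add_zero, zero_im] at him
  exact (im_pos_of_mem_instabilityDisc hβ).ne' him

theorem norm_pos_of_mem_instabilityDisc (hβ : β ∈ instabilityDisc) : 0 < ‖β‖ :=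
  norm_pos_iff.mpr (by simpa using add_intCast_ne_zero_of_mem_instabilityDisc hβ 0)

theorem one_lt_norm_add_intCast_of_mem_instabilityDisc (hβ : β ∈ instabilityDisc) {k : ℤ}
    (hk : k ≠ 0) : 1 < ‖β + k‖ := by
  rw [instabilityDisc, mem_ball_iff_norm] at hβ
  have hcentre : 2 / √3 ≤ ‖I / √3 + k‖ := by
    have hk1 : (1 : ℝ) ≤ (k : ℝ) ^ 2 := by
      have : (1 : ℤ) ≤ k ^ 2 := by nlinarith [Int.one_le_abs hk, sq_abs k]
      exact_mod_cast this
    rw [← pow_le_pow_iff_left₀ (by positivity) (norm_nonneg _) two_ne_zero, Complex.sq_norm,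
      normSq_apply]
    simp only [add_re, div_ofReal_re, I_re, zero_div, intCast_re, zero_add, add_im,
      div_ofReal_im, I_im, one_div, intCast_im, add_zero]
    field_simp
    rw [Real.sq_sqrt (by norm_num)]
    linarith
  have htri := norm_sub_le (β + k) (β - I / √3)
  rw [show β + k - (β - I / √3) = I / √3 + k by ring] at htri
  linarith

end InstabilityDisc

theorem two_lt_one_div_sq_add_one_div_sq {m n : ℝ} (hm : 0 < m) (hn : 0 < n)
    (hm' : m < √3 - 1) (hn' : n < √3 + 1) : 2 < 1 / m ^ 2 + 1 / n ^ 2 := by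
  have hs : √3 ^ 2 = 3 := Real.sq_sqrt (by norm_num)
  have hs1 := one_lt_sqrt_three
  calc (2 : ℝ) = 1 / (√3 - 1) ^ 2 + 1 / (√3 + 1) ^ 2 := by
        rw [div_add_div _ _ (by positivity) (by positivity), eq_div_iff (by positivity)]
        linear_combination (2 * √3 ^ 2) * hs
    _ < 1 / m ^ 2 + 1 / n ^ 2 := by gcongr

noncomputable def classCoeff (p a : ℂ) : ℝ := 1 / ‖p‖ ^ 2 - 1 / ‖a‖ ^ 2

theorem classCoeff_mul (p β : ℂ) : classCoeff p (p * β) = (1 - 1 / ‖β‖ ^ 2) / ‖p‖ ^ 2 := by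
  rw [classCoeff, norm_mul, mul_pow, ← one_div_mul_one_div]; ring

section ClassCoeff

variable {p a : ℂ}

theorem div_mem_instabilityDisc_iff (hp : p ≠ 0) :
    a / p ∈ instabilityDisc ↔ ‖a - I * p / √3‖ < (2 / √3 - 1) * ‖p‖ := by
  rw [instabilityDisc, mem_ball_iff_norm, show a / p - I / √3 = (a - I * p / √3) / p by
    field_simp, norm_div, div_lt_iff₀ (norm_pos_iff.mpr hp)]

theorem add_intCast_mul_ne_zero (hp : p ≠ 0) (h : a / p ∈ instabilityDisc) (k : ℤ) :
    a + k * p ≠ 0 := by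
  rw [show a + k * p = p * (a / p + k) by field_simp]
  exact mul_ne_zero hp (add_intCast_ne_zero_of_mem_instabilityDisc h k)

theorem classCoeff_neg (hp : p ≠ 0) (h : a / p ∈ instabilityDisc) : classCoeff p a < 0 := by
  obtain ⟨β, rfl⟩ : ∃ β, a = p * β := ⟨a / p, (mul_div_cancel₀ a hp).symm⟩
  rw [mul_div_cancel_left₀ _ hp] at h
  have hβ0 := norm_pos_of_mem_instabilityDisc h
  have hβ1 : ‖β‖ < 1 := by linarith [norm_lt_of_mem_instabilityDisc h, sqrt_three_lt_two]
  rw [classCoeff_mul]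
  refine div_neg_of_neg_of_pos ?_ (by positivity)
  rw [sub_neg, lt_one_div one_pos (by positivity), div_one]
  exact pow_lt_one₀ hβ0.le hβ1 two_ne_zero

theorem classCoeff_add_intCast_mul_pos (hp : p ≠ 0) (h : a / p ∈ instabilityDisc) {k : ℤ}
    (hk : k ≠ 0) : 0 < classCoeff p (a + k * p) := by
  obtain ⟨β, rfl⟩ : ∃ β, a = p * β := ⟨a / p, (mul_div_cancel₀ a hp).symm⟩
  rw [mul_div_cancel_left₀ _ hp] at h
  have hβk := one_lt_norm_add_intCast_of_mem_instabilityDisc h hk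
  rw [show p * β + k * p = p * (β + k) by ring, classCoeff_mul]
  refine div_pos ?_ (by positivity)
  rw [sub_pos, div_lt_one (by positivity)]
  exact one_lt_pow₀ hβk two_ne_zero

theorem classCoeff_add_classCoeff_add_two_mul_neg (hp : p ≠ 0) (h : a / p ∈ instabilityDisc) :
    classCoeff p a + classCoeff p (a + 2 * p) < 0 := by
  obtain ⟨β, rfl⟩ : ∃ β, a = p * β := ⟨a / p, (mul_div_cancel₀ a hp).symm⟩
  rw [mul_div_cancel_left₀ _ hp] at h
  have hβ := norm_lt_of_mem_instabilityDisc h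
  have hβ2 : 1 < ‖β + 2‖ := by
    simpa using one_lt_norm_add_intCast_of_mem_instabilityDisc h two_ne_zero
  have hβ2' : ‖β + 2‖ < √3 + 1 := by linarith [norm_add_le β 2, Complex.norm_two]
  have key := two_lt_one_div_sq_add_one_div_sq (norm_pos_of_mem_instabilityDisc h)
    (by linarith) hβ hβ2'
  rw [show p * β + 2 * p = p * (β + 2) by ring, classCoeff_mul, classCoeff_mul, ← add_div]
  exact div_neg_of_neg_of_pos (by linarith) (by positivity)

end ClassCoeff

def latticePoint (κ : ℝ) (x₁ x₂ : ℤ) : ℂ := ⟨x₁, κ * x₂⟩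

theorem sq_norm_latticePoint (κ : ℝ) (x₁ x₂ : ℤ) :
    ‖latticePoint κ x₁ x₂‖ ^ 2 = (x₁ : ℝ) ^ 2 + κ ^ 2 * (x₂ : ℝ) ^ 2 := by
  rw [Complex.sq_norm, normSq_apply, latticePoint]; ring

theorem latticePoint_add_mul (κ : ℝ) (a₁ a₂ p₁ p₂ k : ℤ) :
    latticePoint κ (a₁ + k * p₁) (a₂ + k * p₂)
      = latticePoint κ a₁ a₂ + k * latticePoint κ p₁ p₂ := by
  apply Complex.ext
  · simp [latticePoint]
  · simp only [latticePoint, Int.cast_add, Int.cast_mul, add_im, mul_im, intCast_re, intCast_im,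
      zero_mul, add_zero]
    ring

theorem latticePoint_zero (κ : ℝ) : latticePoint κ 0 0 = 0 := by
  apply Complex.ext <;> simp [latticePoint]

theorem im_latticePoint_div_latticePoint (κ : ℝ) (a₁ a₂ p₁ p₂ : ℤ) :
    (latticePoint κ a₁ a₂ / latticePoint κ p₁ p₂).im
      = -κ * (a₁ * p₂ - a₂ * p₁ : ℤ) / normSq (latticePoint κ p₁ p₂) := by
  rw [div_im]
  simp only [latticePoint, normSq_mk, Int.cast_sub, Int.cast_mul, neg_mul]
  ring

theorem exists_norm_latticePoint_sub_le {κ : ℝ} (hκ : κ ≠ 0) (ζ : ℂ) :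
    ∃ a₁ a₂ : ℤ, ‖latticePoint κ a₁ a₂ - ζ‖ ≤ √(1 + κ ^ 2) / 2 := by
  have sq_sub_round_le (x : ℝ) : (x - round x) ^ 2 ≤ 1 / 4 := by
    rw [← sq_abs, show (1 : ℝ) / 4 = (1 / 2) ^ 2 by norm_num]
    exact pow_le_pow_left₀ (abs_nonneg _) (abs_sub_round x) 2
  refine ⟨round ζ.re, round (ζ.im / κ), ?_⟩
  have hre := sq_sub_round_le ζ.re
  have him := sq_sub_round_le (ζ.im / κ)
  have hnorm : ‖latticePoint κ (round ζ.re) (round (ζ.im / κ)) - ζ‖ ^ 2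
      = (ζ.re - round ζ.re) ^ 2 + κ ^ 2 * (ζ.im / κ - round (ζ.im / κ)) ^ 2 := by
    rw [Complex.sq_norm, normSq_apply]
    simp only [latticePoint, sub_re, sub_im]
    field_simp
    ring
  rw [le_div_iff₀ two_pos, Real.le_sqrt (by positivity) (by positivity), mul_pow, hnorm]
  nlinarith [sq_nonneg κ]

theorem sqrt_one_add_sq_div_two_lt {κ R : ℝ} (h : R > √(3 * (κ ^ 2 + 1)) / (2 * (2 - √3))) :
    √(1 + κ ^ 2) / 2 < (2 / √3 - 1) * R := by
  have hs0 : 0 < √3 := by positivity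
  have hs2 := sqrt_three_lt_two
  rw [gt_iff_lt, div_lt_iff₀ (by linarith), Real.sqrt_mul (by norm_num), add_comm] at h
  rw [div_lt_iff₀ two_pos, show (2 / √3 - 1) * R * 2 = R * (2 * (2 - √3)) / √3 by field_simp,
    lt_div_iff₀ hs0]
  linarith

/-- If `|p|_κ > √(3(κ² + 1))/(2(2 - √3))`, there is a class representative
`a ∈ ℤ²` not parallel to `p` (i.e. `a₁p₂ - a₂p₁ ≠ 0`) whose coefficients
`ρ_k = 1/|p|_κ² - 1/|a + kp|_κ²` satisfy `ρ₀ < 0`, `ρ_k > 0` for `k ≠ 0`, and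
`ρ₀ + ρ₂ < 0`; these are the hypotheses of the instability proof. -/
theorem exists_unstable_class
    (κ : ℝ) (hκ : 0 < κ) (p₁ p₂ : ℤ)
    (hbig : Real.sqrt ((p₁ : ℝ) ^ 2 + κ ^ 2 * (p₂ : ℝ) ^ 2)
        > Real.sqrt (3 * (κ ^ 2 + 1)) / (2 * (2 - Real.sqrt 3))) :
    ∃ a₁ a₂ : ℤ,
      (a₁ * p₂ - a₂ * p₁ ≠ 0)
      ∧ (∀ k : ℤ, ((a₁ + k * p₁ : ℤ), (a₂ + k * p₂ : ℤ)) ≠ (0, 0))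
      ∧ (1 / ((p₁ : ℝ) ^ 2 + κ ^ 2 * (p₂ : ℝ) ^ 2)
          - 1 / ((a₁ : ℝ) ^ 2 + κ ^ 2 * (a₂ : ℝ) ^ 2) < 0)
      ∧ (∀ k : ℤ, k ≠ 0 →
          0 < 1 / ((p₁ : ℝ) ^ 2 + κ ^ 2 * (p₂ : ℝ) ^ 2)
            - 1 / (((a₁ + k * p₁ : ℤ) : ℝ) ^ 2 + κ ^ 2 * ((a₂ + k * p₂ : ℤ) : ℝ) ^ 2))
      ∧ ((1 / ((p₁ : ℝ) ^ 2 + κ ^ 2 * (p₂ : ℝ) ^ 2)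
            - 1 / ((a₁ : ℝ) ^ 2 + κ ^ 2 * (a₂ : ℝ) ^ 2))
          + (1 / ((p₁ : ℝ) ^ 2 + κ ^ 2 * (p₂ : ℝ) ^ 2)
            - 1 / (((a₁ + 2 * p₁ : ℤ) : ℝ) ^ 2 + κ ^ 2 * ((a₂ + 2 * p₂ : ℤ) : ℝ) ^ 2))
          < 0) := by
  rw [← sq_norm_latticePoint, Real.sqrt_sq (norm_nonneg _)] at hbig
  have hcov := sqrt_one_add_sq_div_two_lt hbig
  have hp : latticePoint κ p₁ p₂ ≠ 0 := by
    rintro h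
    rw [h, norm_zero, mul_zero] at hcov
    linarith [Real.sqrt_nonneg (1 + κ ^ 2)]
  obtain ⟨a₁, a₂, ha⟩ := exists_norm_latticePoint_sub_le hκ.ne' (I * latticePoint κ p₁ p₂ / √3)
  have hβ := (div_mem_instabilityDisc_iff hp).mpr (ha.trans_lt hcov)
  refine ⟨a₁, a₂, fun h => ?_, fun k h => ?_, ?_, fun k hk => ?_, ?_⟩
  · have := im_pos_of_mem_instabilityDisc hβ
    rw [im_latticePoint_div_latticePoint, h] at this
    simp at this
  · obtain ⟨h₁, h₂⟩ := Prod.mk.inj h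
    apply add_intCast_mul_ne_zero hp hβ k
    rw [← latticePoint_add_mul, h₁, h₂, latticePoint_zero]
  · simp only [← sq_norm_latticePoint]
    exact classCoeff_neg hp hβ
  · simp only [← sq_norm_latticePoint, latticePoint_add_mul]
    exact classCoeff_add_intCast_mul_pos hp hβ hk
  · simp only [← sq_norm_latticePoint, latticePoint_add_mul, Int.cast_ofNat]
    exact classCoeff_add_classCoeff_add_two_mul_neg hp hβ
end

section
/- Let p₁ ∈ ℤ with |p₁| ≥ 2, let κ ≥ |p₁|, and set p = (p₁, 0). Then there exists k ∈ ℤ² with k ≠ 0 such that ρ_k = 1/|p|_κ² − 1/|k|_κ² < 0 and k is not an integer multiple of p (for example k = (1,0)). Hence the quadratic form F = −(1/2)Σ_{k≠0} ρ_k |ω_k|² is indefinite even after restricting to the complement of the modes ω_{np}, n ∈ ℤ, fixed by the Casimirs, so the energy-Casimir method cannot establish nonlinear stability for this linearly stable equilibrium. -/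
/-- For `p = (p₁, 0)` with `|p₁| ≥ 2` and `κ ≥ |p₁|`, there is a nonzero mode
`k ∈ ℤ²` with `ρ_k = 1/|p|_κ² - 1/|k|_κ² < 0` which is not an integer
multiple of `p`; hence the energy-Casimir form `F` remains indefinite after
fixing the Casimirs, and the energy-Casimir method cannot establish nonlinear
stability for this linearly stable equilibrium. -/
theorem energy_casimir_indefinite
    (p₁ : ℤ) (hp : 2 ≤ |p₁|) (κ : ℝ) (hκ : |(p₁ : ℝ)| ≤ κ) :
    ∃ k₁ k₂ : ℤ,
      ¬(k₁ = 0 ∧ k₂ = 0)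
      ∧ 1 / ((p₁ : ℝ) ^ 2 + κ ^ 2 * (0 : ℝ) ^ 2)
          - 1 / ((k₁ : ℝ) ^ 2 + κ ^ 2 * (k₂ : ℝ) ^ 2) < 0
      ∧ ∀ n : ℤ, (k₁, k₂) ≠ (n * p₁, n * 0) := by
  refine ⟨1, 0, by simp, ?_, ?_⟩
  · have hp2 : (2:ℝ) ≤ |(p₁ : ℝ)| := by
      have := hp
      push_cast [← Int.cast_abs]
      exact_mod_cast hp
    have h4 : (4:ℝ) ≤ (p₁ : ℝ) ^ 2 := by
      nlinarith [sq_abs ((p₁ : ℝ))]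
    have h1 : 1 / ((p₁ : ℝ) ^ 2) ≤ 1 / 4 := by
      apply one_div_le_one_div_of_le <;> linarith
    rw [one_div] at h1
    norm_num
    linarith
  · intro n h
    have h1 : (1 : ℤ) = n * p₁ := (Prod.mk.injEq _ _ _ _).mp h |>.1
    have : p₁ ∣ 1 := ⟨n, by linarith [h1]⟩
    have := Int.le_of_dvd one_pos ((abs_dvd _ _).mpr this)
    omega
end
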